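/- arXiv:1405.5317 — 2 statements merged into one kernel-verified Lean document; each statement's English description precedes it below -/
import Mathlib

section
/- Let H be a complex Hilbert space, C a bounded linear operator on H, n ≥ 1 an integer, and let P be the orthogonal projection onto the kernel of Cⁿ. Then ‖C∘P‖² ≤ (n−1)·‖C C* − C* C‖ and ‖C*∘P‖² ≤ n·‖C C* − C* C‖ (operator norms; C* is the Hilbert-space adjoint of C). -/
/-!
Write `D = C C* - C* C`. For every `x`, `re ⟪D x, x⟫ = ‖C* x‖² - ‖C x‖²`, so
`‖C* x‖² ≤ ‖C x‖² + ‖D‖ ‖x‖²`. If `Cⁿ⁺¹ x = 0` then `Cⁿ (C x) = 0`, and by induction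
`‖C* C x‖² ≤ n ‖D‖ ‖C x‖²`; together with `‖C x‖² = re ⟪C* C x, x⟫ ≤ ‖C* C x‖ ‖x‖` this
gives `‖C x‖² ≤ n ‖D‖ ‖x‖²`. The bounds on `ker Cⁿ` pass to `C P` and `C* P` because the
orthogonal projection `P` has norm at most one.
-/

open RCLike
open scoped InnerProductSpace

namespace ContinuousLinearMap

theorem norm_mul_sq_le_of_norm_le_one {𝕜 E : Type*} [RCLike 𝕜] [SeminormedAddCommGroup E]
    [NormedSpace 𝕜 E] {T P : E →L[𝕜] E} {a : ℝ} (ha : 0 ≤ a) (hP : ‖P‖ ≤ 1)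
    (hT : ∀ x, ‖T (P x)‖ ^ 2 ≤ a * ‖P x‖ ^ 2) : ‖T * P‖ ^ 2 ≤ a := by
  rw [← Real.le_sqrt (norm_nonneg _) ha]
  refine opNorm_le_bound _ (Real.sqrt_nonneg a) fun x ↦ ?_
  calc ‖T (P x)‖ ≤ √a * ‖P x‖ := by
        rw [← pow_le_pow_iff_left₀ (norm_nonneg _) (by positivity) two_ne_zero, mul_pow,
          Real.sq_sqrt ha]
        exact hT x
    _ ≤ √a * ‖x‖ := by
        gcongr
        exact (P.le_opNorm x).trans (mul_le_of_le_one_left (norm_nonneg x) hP)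

section InnerProductSpace

variable {𝕜 E : Type*} [RCLike 𝕜] [NormedAddCommGroup E] [InnerProductSpace 𝕜 E]
  [CompleteSpace E]

theorem norm_adjoint_apply_sq_le (C : E →L[𝕜] E) (x : E) :
    ‖adjoint C x‖ ^ 2 ≤ ‖C x‖ ^ 2 + ‖C * adjoint C - adjoint C * C‖ * ‖x‖ ^ 2 := by
  set D := C * adjoint C - adjoint C * C
  have hre : re ⟪D x, x⟫_𝕜 = ‖adjoint C x‖ ^ 2 - ‖C x‖ ^ 2 := by
    rw [apply_norm_sq_eq_inner_adjoint_left C, apply_norm_sq_eq_inner_adjoint_left (adjoint C),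
      adjoint_adjoint, sub_apply, inner_sub_left, map_sub]
    rfl
  have hle : re ⟪D x, x⟫_𝕜 ≤ ‖D‖ * ‖x‖ ^ 2 :=
    calc re ⟪D x, x⟫_𝕜 ≤ ‖D x‖ * ‖x‖ := re_inner_le_norm _ _
      _ ≤ ‖D‖ * ‖x‖ * ‖x‖ := by gcongr; exact D.le_opNorm x
      _ = ‖D‖ * ‖x‖ ^ 2 := by ring
  linarith

theorem norm_apply_sq_le_of_norm_adjoint_apply_sq_le {C : E →L[𝕜] E} {x : E} {a : ℝ}
    (ha : 0 ≤ a) (h : ‖adjoint C (C x)‖ ^ 2 ≤ a * ‖C x‖ ^ 2) : ‖C x‖ ^ 2 ≤ a * ‖x‖ ^ 2 := by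
  have hCx : ‖C x‖ ^ 2 ≤ ‖adjoint C (C x)‖ * ‖x‖ := by
    rw [apply_norm_sq_eq_inner_adjoint_left C]
    exact re_inner_le_norm _ _
  rcases (sq_nonneg ‖C x‖).eq_or_lt with h0 | hpos
  · rw [← h0]
    positivity
  · refine le_of_mul_le_mul_left ?_ hpos
    calc ‖C x‖ ^ 2 * ‖C x‖ ^ 2 ≤ (‖adjoint C (C x)‖ * ‖x‖) ^ 2 := by rw [← sq]; gcongr
      _ = ‖adjoint C (C x)‖ ^ 2 * ‖x‖ ^ 2 := by ring
      _ ≤ a * ‖C x‖ ^ 2 * ‖x‖ ^ 2 := by gcongr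
      _ = ‖C x‖ ^ 2 * (a * ‖x‖ ^ 2) := by ring

theorem norm_apply_sq_le_of_pow_apply_eq_zero (C : E →L[𝕜] E) (n : ℕ) {x : E}
    (hx : (C ^ n) x = 0) :
    ‖C x‖ ^ 2 ≤ ((n : ℝ) - 1) * ‖C * adjoint C - adjoint C * C‖ * ‖x‖ ^ 2 := by
  induction n generalizing x with
  | zero =>
    obtain rfl : x = 0 := by simpa using hx
    simp
  | succ n ih =>
    have hCx : (C ^ n) (C x) = 0 := by rw [pow_succ] at hx; exact hx
    have hadj : ‖adjoint C (C x)‖ ^ 2 ≤ n * ‖C * adjoint C - adjoint C * C‖ * ‖C x‖ ^ 2 := by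
      linarith [norm_adjoint_apply_sq_le C (C x), ih hCx]
    rw [Nat.cast_succ, add_sub_cancel_right]
    exact norm_apply_sq_le_of_norm_adjoint_apply_sq_le (by positivity) hadj

theorem norm_adjoint_apply_sq_le_of_pow_apply_eq_zero (C : E →L[𝕜] E) (n : ℕ) {x : E}
    (hx : (C ^ n) x = 0) :
    ‖adjoint C x‖ ^ 2 ≤ n * ‖C * adjoint C - adjoint C * C‖ * ‖x‖ ^ 2 := by
  linarith [norm_adjoint_apply_sq_le C x, norm_apply_sq_le_of_pow_apply_eq_zero C n hx]

end InnerProductSpace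

end ContinuousLinearMap

/-- **Buchholz's lemma.** Let `H` be a complex Hilbert space, `C` a bounded linear
operator on `H`, `n ≥ 1`, and `P` the orthogonal projection onto the kernel of `Cⁿ`
(characterized as the idempotent self-adjoint bounded operator whose range is `ker (Cⁿ)`).
Then `‖C P‖² ≤ (n−1)·‖C C* − C* C‖` and `‖C* P‖² ≤ n·‖C C* − C* C‖`. -/
theorem stmt0 {H : Type*} [NormedAddCommGroup H] [InnerProductSpace ℂ H] [CompleteSpace H]
    (C : H →L[ℂ] H) (n : ℕ) (hn : 1 ≤ n)
    (P : H →L[ℂ] H)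
    (hPidem : P * P = P)
    (hPsa : ContinuousLinearMap.adjoint P = P)
    (hPrange : LinearMap.range (P : H →ₗ[ℂ] H) = LinearMap.ker ((C ^ n : H →L[ℂ] H) : H →ₗ[ℂ] H)) :
    ‖C * P‖ ^ 2 ≤ ((n : ℝ) - 1) *
        ‖C * ContinuousLinearMap.adjoint C - ContinuousLinearMap.adjoint C * C‖ ∧
    ‖ContinuousLinearMap.adjoint C * P‖ ^ 2 ≤ (n : ℝ) *
        ‖C * ContinuousLinearMap.adjoint C - ContinuousLinearMap.adjoint C * C‖ := by
  have hP : IsStarProjection P := ⟨hPidem, (ContinuousLinearMap.star_eq_adjoint P).trans hPsa⟩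
  have hker (x : H) : (C ^ n) (P x) = 0 :=
    LinearMap.mem_ker.1 (hPrange ▸ LinearMap.mem_range_self (P : H →ₗ[ℂ] H) x)
  have hn' : (0 : ℝ) ≤ n - 1 := sub_nonneg.2 (Nat.one_le_cast.2 hn)
  exact ⟨ContinuousLinearMap.norm_mul_sq_le_of_norm_le_one (by positivity) hP.norm_le
      fun x ↦ C.norm_apply_sq_le_of_pow_apply_eq_zero n (hker x),
    ContinuousLinearMap.norm_mul_sq_le_of_norm_le_one (by positivity) hP.norm_le
      fun x ↦ C.norm_adjoint_apply_sq_le_of_pow_apply_eq_zero n (hker x)⟩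
end

section
/- Let λ > 0 and κ > 0, and let Λ : ℝ⁴ → ℝ⁴ be a linear isomorphism preserving the Minkowski quadratic form q(x) = (x⁰)² − |x⃗|². Then there exists a constant c' > 0 such that D_κ(Λa) ≤ c'·D_κ(a) for all a ∈ ℝ⁴. In particular, if bounded operators B₁, B₂ on a Hilbert space satisfy ‖[B₁, B₂(a)]‖ ≤ c·D_κ(a) for all a, then ‖[B₁, B₂(Λa)]‖ ≤ c·c'·D_κ(a) for all a. -/
noncomputable section

open ContinuousLinearMap

/-- Minkowski space modeled as `ℝ⁴` with the Euclidean structure. -/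
abbrev M4 : Type := EuclideanSpace ℝ (Fin 4)

/-- Euclidean norm of the spatial part `a⃗` of `a ∈ ℝ⁴`. -/
def snorm3 (a : M4) : ℝ := Real.sqrt ((a 1) ^ 2 + (a 2) ^ 2 + (a 3) ^ 2)

/-- The commutator-bounding function `D_κ` (with length parameter `lam`). -/
def Dkappa (lam κ : ℝ) (a : M4) : ℝ :=
  if (snorm3 a) ^ 2 ≤ (a 0) ^ 2 then 1
  else lam ^ κ / (lam + snorm3 a - |a 0|) ^ κ

/-- The Minkowski quadratic form `q(x) = (x⁰)² − |x⃗|²`. -/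
def mq (x : M4) : ℝ := (x 0) ^ 2 - ((x 1) ^ 2 + (x 2) ^ 2 + (x 3) ^ 2)

/-!
With `s = |a⃗|`, `t = |a⁰|` and the spacelike excess `e(a) = max (s - t) 0`, one has
`D_κ(a) = (λ / (λ + e(a)))^κ`. A linear map preserving `q` preserves `(s - t)(s + t)`, and `s + t`
is comparable to `‖a‖`; so a bound `K` on `Λ` and on `Λ⁻¹` makes `e(a)` and `e(Λa)` comparable up
to the factor `K`, and then `D_κ(Λa) ≤ (1 + K)^|κ| D_κ(a)` for every real `κ`. The commutator bound
transfers by evaluating the hypothesis at `Λa`; it gives `c ≥ 0` at `a = 0`, since `D_κ(0) = 1`.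
-/

open Real

lemma snorm3_sq (a : M4) : snorm3 a ^ 2 = (a 1) ^ 2 + (a 2) ^ 2 + (a 3) ^ 2 :=
  sq_sqrt (by positivity)

lemma mq_eq_sq_abs_sub_sq_snorm3 (a : M4) : mq a = |a 0| ^ 2 - snorm3 a ^ 2 := by
  rw [sq_abs, snorm3_sq, mq]

lemma norm_sq_eq_sq_add_sq_snorm3 (a : M4) : ‖a‖ ^ 2 = (a 0) ^ 2 + snorm3 a ^ 2 := by
  rw [snorm3_sq, EuclideanSpace.norm_sq_eq, Fin.sum_univ_four]
  simp only [Real.norm_eq_abs, sq_abs]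
  ring

lemma snorm3_nonneg (a : M4) : 0 ≤ snorm3 a := sqrt_nonneg _

lemma norm_le_abs_add_snorm3 (a : M4) : ‖a‖ ≤ |a 0| + snorm3 a := by
  rw [← pow_le_pow_iff_left₀ (norm_nonneg a) (by positivity [snorm3_nonneg a]) two_ne_zero,
    norm_sq_eq_sq_add_sq_snorm3]
  nlinarith [abs_nonneg (a 0), snorm3_nonneg a, sq_abs (a 0)]

lemma abs_add_snorm3_le_sqrt_two_mul_norm (a : M4) : |a 0| + snorm3 a ≤ √2 * ‖a‖ := by
  rw [← pow_le_pow_iff_left₀ (by positivity [snorm3_nonneg a]) (by positivity) two_ne_zero,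
    mul_pow, sq_sqrt zero_le_two, norm_sq_eq_sq_add_sq_snorm3]
  nlinarith [sq_nonneg (|a 0| - snorm3 a), sq_abs (a 0)]

def spacelikeExcess (a : M4) : ℝ := max (snorm3 a - |a 0|) 0

lemma spacelikeExcess_nonneg (a : M4) : 0 ≤ spacelikeExcess a := le_max_right _ _

lemma spacelikeExcess_le_mul_of_mq_eq {a b : M4} (hq : mq b = mq a) {K : ℝ}
    (hK : |b 0| + snorm3 b ≤ K * (|a 0| + snorm3 a)) :
    spacelikeExcess a ≤ K * spacelikeExcess b := by
  rw [mq_eq_sq_abs_sub_sq_snorm3, mq_eq_sq_abs_sub_sq_snorm3] at hq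
  have ha := snorm3_nonneg a
  have hb := snorm3_nonneg b
  have ha0 := abs_nonneg (a 0)
  have hb0 := abs_nonneg (b 0)
  rcases le_or_gt (snorm3 a) |a 0| with htime | hspace
  · have htime_b : snorm3 b ≤ |b 0| := by nlinarith
    simp [spacelikeExcess, htime, htime_b]
  · have hspace_b : |b 0| < snorm3 b := by nlinarith
    rw [spacelikeExcess, spacelikeExcess, max_eq_left (sub_nonneg.2 hspace.le),
      max_eq_left (sub_nonneg.2 hspace_b.le)]
    have hprod : (snorm3 a - |a 0|) * (|a 0| + snorm3 a)
        ≤ K * (snorm3 b - |b 0|) * (|a 0| + snorm3 a) := by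
      nlinarith [mul_le_mul_of_nonneg_left hK (sub_nonneg.2 hspace_b.le)]
    exact le_of_mul_le_mul_right hprod (by linarith)

lemma abs_add_snorm3_map_le (T : M4 →L[ℝ] M4) (a : M4) :
    |T a 0| + snorm3 (T a) ≤ √2 * ‖T‖ * (|a 0| + snorm3 a) := calc
  |T a 0| + snorm3 (T a) ≤ √2 * ‖T a‖ := abs_add_snorm3_le_sqrt_two_mul_norm _
  _ ≤ √2 * (‖T‖ * (|a 0| + snorm3 a)) := by
    gcongr
    exact (T.le_opNorm a).trans (by gcongr; exact norm_le_abs_add_snorm3 a)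
  _ = √2 * ‖T‖ * (|a 0| + snorm3 a) := by ring

lemma rpow_le_rpow_abs_mul_of_le_mul {x y C : ℝ} (hx : 0 < x) (hy : 0 < y)
    (hxy : x ≤ C * y) (hyx : y ≤ C * x) (κ : ℝ) : x ^ κ ≤ C ^ |κ| * y ^ κ := by
  have hC : 0 ≤ C := nonneg_of_mul_nonneg_left (hx.le.trans hxy) hy
  rcases le_or_gt 0 κ with hκ | hκ
  · rw [abs_of_nonneg hκ, ← mul_rpow hC hy.le]
    exact rpow_le_rpow hx.le hxy hκ
  · have hinv : x⁻¹ ≤ C * y⁻¹ := by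
      rw [← div_eq_mul_inv, le_div_iff₀ hy, inv_mul_le_iff₀ hx]; linarith
    rw [abs_of_neg hκ, ← inv_inv x, ← inv_inv y, inv_rpow (inv_pos.2 hx).le,
      inv_rpow (inv_pos.2 hy).le, ← rpow_neg (inv_pos.2 hx).le, ← rpow_neg (inv_pos.2 hy).le,
      ← mul_rpow hC (inv_pos.2 hy).le]
    exact rpow_le_rpow (inv_pos.2 hx).le hinv (by linarith)

lemma Dkappa_eq_rpow {lam : ℝ} (hlam : 0 < lam) (κ : ℝ) (a : M4) :
    Dkappa lam κ a = (lam / (lam + spacelikeExcess a)) ^ κ := by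
  have ha := snorm3_nonneg a
  rw [Dkappa, spacelikeExcess]
  split_ifs with htime <;> rw [sq_le_sq, abs_of_nonneg ha] at htime
  · rw [max_eq_right (sub_nonpos.2 htime), add_zero, div_self hlam.ne', one_rpow]
  · push Not at htime
    rw [max_eq_left (sub_nonneg.2 htime.le), div_rpow hlam.le (by linarith), add_sub_assoc]

lemma Dkappa_zero (lam κ : ℝ) : Dkappa lam κ 0 = 1 := by
  simp [Dkappa, snorm3]

lemma exists_Dkappa_map_le_mul {lam : ℝ} (hlam : 0 < lam) (κ : ℝ) (Λ : M4 ≃ₗ[ℝ] M4)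
    (hΛ : ∀ x, mq (Λ x) = mq x) :
    ∃ c' : ℝ, 0 < c' ∧ ∀ a : M4, Dkappa lam κ (Λ a) ≤ c' * Dkappa lam κ a := by
  set T := LinearMap.toContinuousLinearMap (Λ : M4 →ₗ[ℝ] M4)
  set S := LinearMap.toContinuousLinearMap (Λ.symm : M4 →ₗ[ℝ] M4)
  set K := max (√2 * ‖T‖) (√2 * ‖S‖)
  have hK : 0 ≤ K := (by positivity : (0 : ℝ) ≤ √2 * ‖T‖).trans (le_max_left _ _)
  refine ⟨(1 + K) ^ |κ|, by positivity, fun a => ?_⟩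
  have hfwd : spacelikeExcess a ≤ K * spacelikeExcess (Λ a) :=
    (spacelikeExcess_le_mul_of_mq_eq (hΛ a) (abs_add_snorm3_map_le T a)).trans
      (by gcongr; exacts [spacelikeExcess_nonneg _, le_max_left _ _])
  have hbwd : spacelikeExcess (Λ a) ≤ K * spacelikeExcess a :=
    (spacelikeExcess_le_mul_of_mq_eq (hΛ a).symm
      (by simpa [S] using abs_add_snorm3_map_le S (Λ a))).trans
      (by gcongr; exacts [spacelikeExcess_nonneg _, le_max_right _ _])
  have he := spacelikeExcess_nonneg a
  have he' := spacelikeExcess_nonneg (Λ a)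
  rw [Dkappa_eq_rpow hlam, Dkappa_eq_rpow hlam]
  refine rpow_le_rpow_abs_mul_of_le_mul (by positivity) (by positivity) ?_ ?_ κ
  all_goals
    rw [← mul_div_assoc, div_le_div_iff₀ (by positivity) (by positivity)]
    nlinarith [mul_nonneg hK hlam.le]

theorem stmt1_general (lam κ : ℝ) (hlam : 0 < lam)
    (Λ : M4 ≃ₗ[ℝ] M4) (hΛ : ∀ x, mq (Λ x) = mq x) :
    ∃ c' : ℝ, 0 < c' ∧ (∀ a : M4, Dkappa lam κ (Λ a) ≤ c' * Dkappa lam κ a) ∧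
      ∀ (H : Type) [NormedAddCommGroup H] [InnerProductSpace ℂ H] [CompleteSpace H]
        (U : M4 → H →L[ℂ] H),
        U 0 = 1 → (∀ x y, U (x + y) = U x * U y) →
        (∀ x, adjoint (U x) = U (-x)) → (∀ ψ : H, Continuous fun x => U x ψ) →
        ∀ (B₁ B₂ : H →L[ℂ] H) (c : ℝ),
          (∀ a : M4, ‖B₁ * (U a * B₂ * U (-a)) - (U a * B₂ * U (-a)) * B₁‖
              ≤ c * Dkappa lam κ a) →
          ∀ a : M4, ‖B₁ * (U (Λ a) * B₂ * U (-(Λ a))) - (U (Λ a) * B₂ * U (-(Λ a))) * B₁‖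
              ≤ c * c' * Dkappa lam κ a := by
  obtain ⟨c', hc', hD⟩ := exists_Dkappa_map_le_mul hlam κ Λ hΛ
  refine ⟨c', hc', hD, fun H _ _ _ U _ _ _ _ B₁ B₂ c hB a => ?_⟩
  have hc : 0 ≤ c := by simpa [Dkappa_zero] using (norm_nonneg _).trans (hB 0)
  calc _ ≤ c * Dkappa lam κ (Λ a) := hB (Λ a)
    _ ≤ c * (c' * Dkappa lam κ a) := mul_le_mul_of_nonneg_left (hD a) hc
    _ = c * c' * Dkappa lam κ a := by ring

/-- Covariance of the `κ`-type commutator condition: if `Λ` is a linear isomorphism of `ℝ⁴`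
preserving the Minkowski quadratic form, then `D_κ(Λa) ≤ c'·D_κ(a)` for some `c' > 0`; in
particular a `κ`-type commutator bound for `B₁, B₂(a)` transfers to `B₁, B₂(Λa)` with
constant `c·c'`. -/
theorem stmt1 (lam κ : ℝ) (hlam : 0 < lam) (hκ : 0 < κ)
    (Λ : M4 ≃ₗ[ℝ] M4) (hΛ : ∀ x, mq (Λ x) = mq x) :
    ∃ c' : ℝ, 0 < c' ∧ (∀ a : M4, Dkappa lam κ (Λ a) ≤ c' * Dkappa lam κ a) ∧
      ∀ (H : Type) [NormedAddCommGroup H] [InnerProductSpace ℂ H] [CompleteSpace H]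
        (U : M4 → H →L[ℂ] H),
        U 0 = 1 → (∀ x y, U (x + y) = U x * U y) →
        (∀ x, adjoint (U x) = U (-x)) → (∀ ψ : H, Continuous fun x => U x ψ) →
        ∀ (B₁ B₂ : H →L[ℂ] H) (c : ℝ),
          (∀ a : M4, ‖B₁ * (U a * B₂ * U (-a)) - (U a * B₂ * U (-a)) * B₁‖
              ≤ c * Dkappa lam κ a) →
          ∀ a : M4, ‖B₁ * (U (Λ a) * B₂ * U (-(Λ a))) - (U (Λ a) * B₂ * U (-(Λ a))) * B₁‖
              ≤ c * c' * Dkappa lam κ a :=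
  stmt1_general lam κ hlam Λ hΛ
end
end
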